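/- arXiv:1909.09717 — 4 statements merged into one kernel-verified Lean document; each statement's English description precedes it below -/
import Mathlib

section
/- Let A be a normed division algebra. Then for all a, b, c ∈ A one has ⟨a*c, b*c⟩ = ⟨a, b⟩·‖c‖² and ⟨c*a, c*b⟩ = ⟨a, b⟩·‖c‖². -/
open scoped RealInnerProductSpace

/-- A normed division algebra: a real inner product space with an `ℝ`-bilinear
multiplication (not necessarily associative or commutative), a two-sided
multiplicative identity `one ≠ 0`, satisfying `‖a*b‖ = ‖a‖ * ‖b‖`. -/
structure NormedDivisionAlgebra (A : Type*) [NormedAddCommGroup A] [InnerProductSpace ℝ A] where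
  mul : A →ₗ[ℝ] A →ₗ[ℝ] A
  one : A
  one_ne_zero : one ≠ 0
  one_mul : ∀ a : A, mul one a = a
  mul_one : ∀ a : A, mul a one = a
  norm_mul : ∀ a b : A, ‖mul a b‖ = ‖a‖ * ‖b‖

namespace NormedDivisionAlgebra

variable {A : Type*} [NormedAddCommGroup A] [InnerProductSpace ℝ A]

/-- `Re a`: the orthogonal projection of `a` onto the real part `Re A = ℝ · 1`. -/
noncomputable def re (D : NormedDivisionAlgebra A) (a : A) : A :=
  (⟪a, D.one⟫ / ‖D.one‖ ^ 2) • D.one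

/-- `Im a`: the orthogonal projection of `a` onto the imaginary part `Im A = (ℝ · 1)ᗮ`. -/
noncomputable def im (D : NormedDivisionAlgebra A) (a : A) : A := a - D.re a

/-- The conjugate `conj a = Re a - Im a`. -/
noncomputable def conj (D : NormedDivisionAlgebra A) (a : A) : A := D.re a - D.im a

/-- The real part `Re A = ℝ · 1` as a submodule. -/
def ReSub (D : NormedDivisionAlgebra A) : Submodule ℝ A := Submodule.span ℝ {D.one}

/-- The imaginary part `Im A = (ℝ · 1)ᗮ` as a submodule. -/
noncomputable def ImSub (D : NormedDivisionAlgebra A) : Submodule ℝ A := (Submodule.span ℝ {D.one})ᗮ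

/-- The commutator `[a, b] = a*b - b*a`. -/
def comm (D : NormedDivisionAlgebra A) (a b : A) : A := D.mul a b - D.mul b a

/-- The associator `[a, b, c] = (a*b)*c - a*(b*c)`. -/
def assoc (D : NormedDivisionAlgebra A) (a b c : A) : A :=
  D.mul (D.mul a b) c - D.mul a (D.mul b c)

/-- The cross product `a × b = Im (a*b)` (intended for `a, b ∈ Im A`). -/
noncomputable def cross (D : NormedDivisionAlgebra A) (a b : A) : A := D.im (D.mul a b)

end NormedDivisionAlgebra

theorem LinearMap.inner_map_map_of_norm_map_eq_mul {E F : Type*} [NormedAddCommGroup E]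
    [InnerProductSpace ℝ E] [NormedAddCommGroup F] [InnerProductSpace ℝ F] (f : E →ₗ[ℝ] F)
    (r : ℝ) (hf : ∀ x, ‖f x‖ = ‖x‖ * r) (x y : E) : ⟪f x, f y⟫ = ⟪x, y⟫ * r ^ 2 := by
  have h := norm_add_sq_real (f x) (f y)
  rw [← map_add, hf, hf, hf, mul_pow, mul_pow, mul_pow, norm_add_sq_real x y] at h
  linarith

theorem nda_inner_mul_right_left {A : Type*} [NormedAddCommGroup A] [InnerProductSpace ℝ A]
    (D : NormedDivisionAlgebra A) (a b c : A) :
    ⟪D.mul a c, D.mul b c⟫ = ⟪a, b⟫ * ‖c‖ ^ 2 ∧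
      ⟪D.mul c a, D.mul c b⟫ = ⟪a, b⟫ * ‖c‖ ^ 2 :=
  ⟨(D.mul.flip c).inner_map_map_of_norm_map_eq_mul ‖c‖ (fun x => D.norm_mul x c) a b,
    (D.mul c).inner_map_map_of_norm_map_eq_mul ‖c‖
      (fun x => (D.norm_mul c x).trans (mul_comm _ _)) a b⟩
end

section
/- Let A be a normed division algebra. Then for all a, b, c ∈ A one has ⟨a, b*c⟩ = ⟨a * conj(c), b⟩ and ⟨a, c*b⟩ = ⟨conj(c) * a, b⟩. -/
/-!
Polarizing `‖a * b‖² = ‖a‖² ‖b‖²` in each factor gives the exchange identities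
`⟪a * b, c * d⟫ + ⟪c * b, a * d⟫ = 2 ⟪a, c⟫ ⟪b, d⟫` (and its mirror image). Since `‖1‖ = 1`,
the conjugate is `conj c = 2 ⟪c, 1⟫ • 1 - c`, and the exchange identities with `d = 1`
are exactly the two adjointness relations.
-/

open scoped RealInnerProductSpace

namespace NormedDivisionAlgebra

variable {A : Type*} [NormedAddCommGroup A] [InnerProductSpace ℝ A] (D : NormedDivisionAlgebra A)

theorem norm_one_eq_one : ‖D.one‖ = 1 := by
  have h : ‖D.one‖ * ‖D.one‖ = ‖D.one‖ * 1 := by rw [← D.norm_mul, D.one_mul, _root_.mul_one]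
  exact mul_left_cancel₀ (norm_ne_zero_iff.mpr D.one_ne_zero) h

theorem inner_mul_mul_left (a b c : A) :
    ⟪D.mul a b, D.mul a c⟫ = ‖a‖ ^ 2 * ⟪b, c⟫ := by
  have h : ‖D.mul a (b + c)‖ ^ 2 = (‖a‖ * ‖b + c‖) ^ 2 := by rw [D.norm_mul]
  rw [map_add, norm_add_sq_real, mul_pow, norm_add_sq_real, D.norm_mul, D.norm_mul] at h
  linarith

theorem inner_mul_mul_right (a b c : A) :
    ⟪D.mul a c, D.mul b c⟫ = ⟪a, b⟫ * ‖c‖ ^ 2 := by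
  have h : ‖D.mul (a + b) c‖ ^ 2 = (‖a + b‖ * ‖c‖) ^ 2 := by rw [D.norm_mul]
  rw [map_add, LinearMap.add_apply, norm_add_sq_real, mul_pow, norm_add_sq_real,
    D.norm_mul, D.norm_mul] at h
  linarith

theorem inner_mul_mul_add_inner_mul_mul_swap_left (a b c d : A) :
    ⟪D.mul a b, D.mul c d⟫ + ⟪D.mul c b, D.mul a d⟫ = 2 * ⟪a, c⟫ * ⟪b, d⟫ := by
  have h := D.inner_mul_mul_left (a + c) b d
  rw [map_add, LinearMap.add_apply, LinearMap.add_apply, norm_add_sq_real] at h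
  simp only [inner_add_left, inner_add_right] at h
  linarith [D.inner_mul_mul_left a b d, D.inner_mul_mul_left c b d]

theorem inner_mul_mul_add_inner_mul_mul_swap_right (a b c d : A) :
    ⟪D.mul a b, D.mul c d⟫ + ⟪D.mul a d, D.mul c b⟫ = 2 * ⟪a, c⟫ * ⟪b, d⟫ := by
  have h := D.inner_mul_mul_right a c (b + d)
  rw [map_add, map_add, norm_add_sq_real] at h
  simp only [inner_add_left, inner_add_right] at h
  linarith [D.inner_mul_mul_right a c b, D.inner_mul_mul_right a c d]

theorem conj_eq (c : A) : D.conj c = (2 * ⟪c, D.one⟫) • D.one - c := by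
  simp only [conj, im, re, D.norm_one_eq_one, one_pow, div_one]
  module

theorem mul_conj (a c : A) : D.mul a (D.conj c) = (2 * ⟪c, D.one⟫) • a - D.mul a c := by
  rw [conj_eq, map_sub, map_smul, D.mul_one]

theorem conj_mul (c a : A) : D.mul (D.conj c) a = (2 * ⟪c, D.one⟫) • a - D.mul c a := by
  rw [conj_eq, map_sub, map_smul, LinearMap.sub_apply, LinearMap.smul_apply, D.one_mul]

theorem inner_mul_conj_left (a b c : A) : ⟪D.mul a (D.conj c), b⟫ = ⟪a, D.mul b c⟫ := by
  have h := D.inner_mul_mul_add_inner_mul_mul_swap_left a c b D.one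
  rw [D.mul_one, D.mul_one, real_inner_comm a (D.mul b c)] at h
  rw [mul_conj, inner_sub_left, real_inner_smul_left]
  linarith

theorem inner_conj_mul_left (a b c : A) : ⟪D.mul (D.conj c) a, b⟫ = ⟪a, D.mul c b⟫ := by
  have h := D.inner_mul_mul_add_inner_mul_mul_swap_right c a D.one b
  rw [D.one_mul, D.one_mul, real_inner_comm a (D.mul c b)] at h
  rw [conj_mul, inner_sub_left, real_inner_smul_left]
  linarith

end NormedDivisionAlgebra

theorem nda_inner_mul_conj {A : Type*} [NormedAddCommGroup A] [InnerProductSpace ℝ A]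
    (D : NormedDivisionAlgebra A) (a b c : A) :
    ⟪a, D.mul b c⟫ = ⟪D.mul a (D.conj c), b⟫ ∧
      ⟪a, D.mul c b⟫ = ⟪D.mul (D.conj c) a, b⟫ :=
  ⟨(D.inner_mul_conj_left a b c).symm, (D.inner_conj_mul_left a b c).symm⟩
end

section
/- Let A be a normed division algebra and let a, b, c ∈ Im A be purely imaginary elements. Then a*(b*c) + b*(a*c) = −2⟨a,b⟩ • c, (a*b)*c + (a*c)*b = −2⟨b,c⟩ • a, and a*b + b*a = −2⟨a,b⟩ • 1. -/
/-!
Polarizing `‖a * x‖ = ‖a‖ ‖x‖` twice gives the exchange identity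
`⟪a * c, b * d⟫ + ⟪a * d, b * c⟫ = 2 ⟪a, b⟫ ⟪c, d⟫`. Putting `1` in one slot shows that left
and right multiplication by an imaginary element are skew-adjoint, and then each identity follows
by pairing both sides with an arbitrary vector and applying the exchange identity once more. The
third identity is the first one at `c = 1`.
-/

open scoped RealInnerProductSpace

namespace NormedDivisionAlgebra

variable {A : Type*} [NormedAddCommGroup A] [InnerProductSpace ℝ A] (D : NormedDivisionAlgebra A)

theorem inner_mul_mul_add_inner_mul_mul (a b c d : A) :
    ⟪D.mul a c, D.mul b d⟫ + ⟪D.mul a d, D.mul b c⟫ = 2 * ⟪a, b⟫ * ⟪c, d⟫ := by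
  have h := D.inner_mul_mul_left (a + b) c d
  simp only [map_add, LinearMap.add_apply, inner_add_left, inner_add_right] at h
  rw [D.inner_mul_mul_left, D.inner_mul_mul_left, norm_add_sq_real,
    real_inner_comm (D.mul a d)] at h
  linarith

variable {D}

theorem inner_one_of_mem_imSub {a : A} (ha : a ∈ D.ImSub) : ⟪a, D.one⟫ = 0 :=
  Submodule.inner_left_of_mem_orthogonal (Submodule.mem_span_singleton_self _) ha

theorem inner_mul_left_of_mem_imSub {a : A} (ha : a ∈ D.ImSub) (x y : A) :
    ⟪D.mul a x, y⟫ = -⟪x, D.mul a y⟫ := by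
  have h := D.inner_mul_mul_add_inner_mul_mul a D.one x y
  rw [D.one_mul, D.one_mul, inner_one_of_mem_imSub ha] at h
  linarith [real_inner_comm y (D.mul a x), real_inner_comm x (D.mul a y)]

theorem inner_mul_right_of_mem_imSub {c : A} (hc : c ∈ D.ImSub) (x y : A) :
    ⟪D.mul x c, y⟫ = -⟪x, D.mul y c⟫ := by
  have h := D.inner_mul_mul_add_inner_mul_mul x y c D.one
  rw [D.mul_one, D.mul_one, inner_one_of_mem_imSub hc] at h
  linarith

theorem mul_mul_add_mul_mul_left_of_mem_imSub {a b : A} (ha : a ∈ D.ImSub) (hb : b ∈ D.ImSub)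
    (c : A) : D.mul a (D.mul b c) + D.mul b (D.mul a c) = (-(2 * ⟪a, b⟫)) • c := by
  refine ext_inner_right ℝ fun d => ?_
  rw [inner_add_left, real_inner_smul_left, inner_mul_left_of_mem_imSub ha (D.mul b c),
    inner_mul_left_of_mem_imSub hb (D.mul a c), real_inner_comm (D.mul a d)]
  linear_combination -D.inner_mul_mul_add_inner_mul_mul a b c d

theorem mul_mul_add_mul_mul_right_of_mem_imSub {b c : A} (hb : b ∈ D.ImSub) (hc : c ∈ D.ImSub)
    (a : A) : D.mul (D.mul a b) c + D.mul (D.mul a c) b = (-(2 * ⟪b, c⟫)) • a := by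
  refine ext_inner_right ℝ fun d => ?_
  rw [inner_add_left, real_inner_smul_left, inner_mul_right_of_mem_imSub hc (D.mul a b),
    inner_mul_right_of_mem_imSub hb (D.mul a c)]
  linear_combination -D.inner_mul_mul_add_inner_mul_mul a d b c

end NormedDivisionAlgebra

theorem nda_polarized_identities_imaginary {A : Type*} [NormedAddCommGroup A]
    [InnerProductSpace ℝ A] (D : NormedDivisionAlgebra A) (a b c : A)
    (ha : a ∈ D.ImSub) (hb : b ∈ D.ImSub) (hc : c ∈ D.ImSub) :
    D.mul a (D.mul b c) + D.mul b (D.mul a c) = (-(2 * ⟪a, b⟫)) • c ∧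
      D.mul (D.mul a b) c + D.mul (D.mul a c) b = (-(2 * ⟪b, c⟫)) • a ∧
      D.mul a b + D.mul b a = (-(2 * ⟪a, b⟫)) • D.one := by
  refine ⟨NormedDivisionAlgebra.mul_mul_add_mul_mul_left_of_mem_imSub ha hb c,
    NormedDivisionAlgebra.mul_mul_add_mul_mul_right_of_mem_imSub hb hc a, ?_⟩
  simpa only [D.mul_one] using
    NormedDivisionAlgebra.mul_mul_add_mul_mul_left_of_mem_imSub ha hb D.one
end

section
/- Let V be a real inner product space equipped with a vector cross product, i.e. an ℝ-bilinear skew-symmetric map × : V × V → V satisfying ⟨v × w, v⟩ = 0 and ‖v × w‖² = ‖v‖²‖w‖² − ⟨v,w⟩² for all v, w ∈ V. On A = ℝ × V, equipped with the inner product ⟨(s,v),(t,w)⟩ = st + ⟨v,w⟩, define the multiplication (s,v)·(t,w) = (st − ⟨v,w⟩, s•w + t•v + v × w). Then this multiplication is ℝ-bilinear with two-sided multiplicative identity (1,0), and satisfies ‖p·q‖ = ‖p‖·‖q‖ for all p, q ∈ A; that is, A is a normed division algebra. -/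
/-!
Bilinearity of the multiplication and the unit laws are direct computations. For the composition
law write `p = (s, v)`, `q = (t, w)`. Since `v × w` is orthogonal to `v` and `w`, it is orthogonal
to `s • w + t • v`, so `‖p · q‖² = (st − ⟨v,w⟩)² + ‖s • w + t • v‖² + ‖v × w‖²`; the Lagrange
identity `‖v × w‖² = ‖v‖²‖w‖² − ⟨v,w⟩²` cancels the mixed terms and leaves
`(s² + ‖v‖²)(t² + ‖w‖²) = ‖p‖²‖q‖²`.
-/

open scoped RealInnerProductSpace

section CrossProductAlgebra

variable {V : Type*} [NormedAddCommGroup V] [InnerProductSpace ℝ V] (cross : V →ₗ[ℝ] V →ₗ[ℝ] V)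

noncomputable def crossProductMul :
    WithLp 2 (ℝ × V) →ₗ[ℝ] WithLp 2 (ℝ × V) →ₗ[ℝ] WithLp 2 (ℝ × V) :=
  LinearMap.mk₂ ℝ (fun p q => (WithLp.equiv 2 (ℝ × V)).symm
      (p.fst * q.fst - ⟪p.snd, q.snd⟫, p.fst • q.snd + q.fst • p.snd + cross p.snd q.snd))
    (fun p p' q => by
      rw [WithLp.ext_iff]; ext
      · simp [inner_add_left]; ring
      · simp; module)
    (fun c p q => by
      rw [WithLp.ext_iff]; ext
      · simp [inner_smul_left]; ring
      · simp [smul_smul]; module)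
    (fun p q q' => by
      rw [WithLp.ext_iff]; ext
      · simp [inner_add_right]; ring
      · simp; module)
    (fun c p q => by
      rw [WithLp.ext_iff]; ext
      · simp [inner_smul_right]; ring
      · simp [smul_smul]; module)

theorem crossProductMul_apply (p q : WithLp 2 (ℝ × V)) :
    crossProductMul cross p q = (WithLp.equiv 2 (ℝ × V)).symm
      (p.fst * q.fst - ⟪p.snd, q.snd⟫, p.fst • q.snd + q.fst • p.snd + cross p.snd q.snd) :=
  rfl

theorem crossProductMul_one_left (q : WithLp 2 (ℝ × V)) :
    crossProductMul cross ((WithLp.equiv 2 (ℝ × V)).symm (1, 0)) q = q := by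
  rw [WithLp.ext_iff]; ext <;> simp [crossProductMul_apply]

theorem crossProductMul_one_right (p : WithLp 2 (ℝ × V)) :
    crossProductMul cross p ((WithLp.equiv 2 (ℝ × V)).symm (1, 0)) = p := by
  rw [WithLp.ext_iff]; ext <;> simp [crossProductMul_apply]

theorem norm_crossProductMul
    (cross_orth_left : ∀ v w : V, ⟪cross v w, v⟫ = 0)
    (cross_orth_right : ∀ v w : V, ⟪cross v w, w⟫ = 0)
    (cross_norm : ∀ v w : V, ‖cross v w‖ ^ 2 = ‖v‖ ^ 2 * ‖w‖ ^ 2 - ⟪v, w⟫ ^ 2)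
    (p q : WithLp 2 (ℝ × V)) :
    ‖crossProductMul cross p q‖ = ‖p‖ * ‖q‖ := by
  set s := p.fst
  set v := p.snd
  set t := q.fst
  set w := q.snd
  have inner_cross_eq_zero : ⟪s • w + t • v, cross v w⟫ = 0 := by
    rw [inner_add_left, real_inner_smul_left, real_inner_smul_left, real_inner_comm,
      cross_orth_right, real_inner_comm, cross_orth_left, mul_zero, mul_zero, add_zero]
  have norm_sq_eq : ‖crossProductMul cross p q‖ ^ 2 = (‖p‖ * ‖q‖) ^ 2 := by
    rw [mul_pow, WithLp.prod_norm_sq_eq_of_L2, WithLp.prod_norm_sq_eq_of_L2,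
      WithLp.prod_norm_sq_eq_of_L2]
    change ‖s * t - ⟪v, w⟫‖ ^ 2 + ‖s • w + t • v + cross v w‖ ^ 2 = _
    rw [norm_add_sq_real _ (cross v w), inner_cross_eq_zero, norm_add_sq_real, cross_norm,
      norm_smul, norm_smul, real_inner_smul_left, real_inner_smul_right, real_inner_comm w v]
    simp only [Real.norm_eq_abs, mul_pow, sq_abs]
    ring
  exact (sq_eq_sq₀ (norm_nonneg _) (by positivity)).1 norm_sq_eq

end CrossProductAlgebra

/-- On `A = ℝ × V` (with the `L²` product inner product
`⟨(s,v),(t,w)⟩ = s*t + ⟨v,w⟩`), the multiplication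
`(s,v)·(t,w) = (s*t − ⟨v,w⟩, s•w + t•v + v × w)` induced by a vector cross
product `×` on `V` makes `A` a normed division algebra with identity `(1,0)`. -/
theorem cross_product_gives_normed_division_algebra
    {V : Type*} [NormedAddCommGroup V] [InnerProductSpace ℝ V]
    (cross : V →ₗ[ℝ] V →ₗ[ℝ] V)
    (cross_skew : ∀ v w : V, cross v w = - cross w v)
    (cross_orth : ∀ v w : V, ⟪cross v w, v⟫ = 0)
    (cross_norm : ∀ v w : V, ‖cross v w‖ ^ 2 = ‖v‖ ^ 2 * ‖w‖ ^ 2 - ⟪v, w⟫ ^ 2) :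
    ∃ D : NormedDivisionAlgebra (WithLp 2 (ℝ × V)),
      D.one = (WithLp.equiv 2 (ℝ × V)).symm (1, 0) ∧
      ∀ p q : WithLp 2 (ℝ × V),
        D.mul p q = (WithLp.equiv 2 (ℝ × V)).symm
          ((WithLp.equiv 2 (ℝ × V) p).1 * (WithLp.equiv 2 (ℝ × V) q).1
              - ⟪(WithLp.equiv 2 (ℝ × V) p).2, (WithLp.equiv 2 (ℝ × V) q).2⟫,
            (WithLp.equiv 2 (ℝ × V) p).1 • (WithLp.equiv 2 (ℝ × V) q).2
              + (WithLp.equiv 2 (ℝ × V) q).1 • (WithLp.equiv 2 (ℝ × V) p).2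
              + cross (WithLp.equiv 2 (ℝ × V) p).2 (WithLp.equiv 2 (ℝ × V) q).2) := by
  have cross_orth_right : ∀ v w : V, ⟪cross v w, w⟫ = 0 := fun v w => by
    rw [cross_skew, inner_neg_left, cross_orth, neg_zero]
  have one_ne_zero : (WithLp.equiv 2 (ℝ × V)).symm (1, 0) ≠ 0 := by
    simp [WithLp.ext_iff]
  exact ⟨⟨crossProductMul cross, (WithLp.equiv 2 (ℝ × V)).symm (1, 0), one_ne_zero,
    crossProductMul_one_left cross, crossProductMul_one_right cross,
    norm_crossProductMul cross cross_orth cross_orth_right cross_norm⟩, rfl, fun _ _ => rfl⟩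
end
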